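/- arXiv:1105.2879 — 3 statements merged into one kernel-verified Lean document; each statement's English description precedes it below -/
import Mathlib

section
/- Let p, q > 0 with b < p/q, where a < b. Then the system (1, x, …, x^d, −log(p − qx)) is a Tchebycheff system on [a,b]: for any a ≤ x_0 < ⋯ < x_{d+1} ≤ b, the determinant of the (d+2)×(d+2) matrix whose rows are (1, x_i, …, x_i^d, −log(p − qx_i)) is strictly positive. -/
open Polynomial Set

/-- Polynomial evaluation is smooth. -/
lemma contDiff_polyeval (P : ℝ[X]) : ContDiff ℝ (⊤ : ℕ∞) fun t : ℝ => P.eval t := by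
  induction P using Polynomial.induction_on' with
  | add p q hp hq => simpa using hp.add hq
  | monomial n a => simpa [Polynomial.eval_monomial] using contDiff_const.mul (contDiff_id.pow n)

/-- Iterated Rolle: a smooth function vanishing at `k+1` increasing points has a zero
of its `k`-th derivative in the convex hull of the points. -/
lemma iter_rolle : ∀ (k : ℕ) (g : ℝ → ℝ) (U : Set ℝ), IsOpen U → ContDiffOn ℝ (⊤ : ℕ∞) g U →
    ∀ (x : Fin (k + 1) → ℝ), StrictMono x → Set.Icc (x 0) (x (Fin.last k)) ⊆ U →
    (∀ i, g (x i) = 0) →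
    ∃ ξ ∈ Set.Icc (x 0) (x (Fin.last k)), iteratedDeriv k g ξ = 0 := by
  intro k
  induction k with
  | zero =>
    intro g U _ _ x _ _ hz
    exact ⟨x 0, ⟨le_refl _, by simp [Fin.last]⟩, by simpa using hz 0⟩
  | succ k ih =>
    intro g U hU hg x hx hsub hz
    have hIccsub : ∀ i : Fin (k + 1),
        Set.Icc (x i.castSucc) (x i.succ) ⊆ Set.Icc (x 0) (x (Fin.last (k + 1))) := by
      intro i
      exact Set.Icc_subset_Icc (hx.monotone (Fin.zero_le _)) (hx.monotone (Fin.le_last _))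
    have H : ∀ i : Fin (k + 1), ∃ c ∈ Set.Ioo (x i.castSucc) (x i.succ), deriv g c = 0 := by
      intro i
      have hlt : x i.castSucc < x i.succ := hx (Fin.castSucc_lt_succ (i := i))
      have hcont : ContinuousOn g (Set.Icc (x i.castSucc) (x i.succ)) :=
        hg.continuousOn.mono ((hIccsub i).trans hsub)
      exact exists_deriv_eq_zero hlt hcont (by rw [hz, hz])
    choose y hy1 hy2 using H
    have hymono : StrictMono y := by
      rw [Fin.strictMono_iff_lt_succ]
      intro i
      have h1 : y i.castSucc < x i.castSucc.succ := (hy1 i.castSucc).2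
      have h2 : x i.succ.castSucc < y i.succ := (hy1 i.succ).1
      have he : x i.castSucc.succ = x i.succ.castSucc := by
        rw [Fin.succ_castSucc]
      exact lt_of_lt_of_le h1 (le_of_eq he |>.trans h2.le)
    have hy0 : x 0 ≤ y 0 := by
      have := (hy1 0).1
      simpa [Fin.castSucc_zero] using this.le
    have hylast : y (Fin.last k) ≤ x (Fin.last (k + 1)) := by
      simpa [Fin.succ_last] using ((hy1 (Fin.last k)).2).le
    have hsub' : Set.Icc (y 0) (y (Fin.last k)) ⊆ Set.Icc (x 0) (x (Fin.last (k + 1))) :=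
      Set.Icc_subset_Icc hy0 hylast
    have hg' : ContDiffOn ℝ (⊤ : ℕ∞) (deriv g) U := hg.deriv_of_isOpen hU (mod_cast le_top)
    obtain ⟨ξ, hξ1, hξ2⟩ := ih (deriv g) U hU hg' y hymono (hsub'.trans hsub) hy2
    exact ⟨ξ, hsub' hξ1, by rwa [iteratedDeriv_succ']⟩

lemma hasDerivAt_affine (p q t : ℝ) : HasDerivAt (fun s : ℝ => p - q * s) (-q) t := by
  simpa using ((hasDerivAt_id t).const_mul q).const_sub p

/-- iterated derivative of `-log (p - q t) - P.eval t` on `Iio (p/q)`. -/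
lemma iterDeriv_formula (p q : ℝ) (hq : 0 < q) (P : ℝ[X]) (n : ℕ) :
    ∀ t ∈ Set.Iio (p / q),
      iteratedDeriv (n + 1) (fun s => -Real.log (p - q * s) - P.eval s) t
        = (Nat.factorial n : ℝ) * (q ^ (n + 1) * ((p - q * t)⁻¹) ^ (n + 1))
          - (Polynomial.derivative^[n + 1] P).eval t := by
  induction n with
  | zero =>
    intro t ht
    have hpos : 0 < p - q * t := by
      rw [Set.mem_Iio, lt_div_iff₀ hq] at ht
      nlinarith
    have hne : p - q * t ≠ 0 := ne_of_gt hpos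
    have h2 : HasDerivAt (fun s : ℝ => Real.log (p - q * s)) ((p - q * t)⁻¹ * -q) t :=
      by have h := (Real.hasDerivAt_log hne).comp t (hasDerivAt_affine p q t); exact h
    have h3 : HasDerivAt (fun s => -Real.log (p - q * s) - P.eval s)
        (-((p - q * t)⁻¹ * -q) - P.derivative.eval t) t := h2.neg.sub (P.hasDerivAt t)
    rw [iteratedDeriv_one, h3.deriv]
    simp [Function.iterate_one]
    ring
  | succ n ih =>
    intro t ht
    have hpos : 0 < p - q * t := by
      rw [Set.mem_Iio, lt_div_iff₀ hq] at ht
      nlinarith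
    have hne : p - q * t ≠ 0 := ne_of_gt hpos
    rw [iteratedDeriv_succ]
    have hev : iteratedDeriv (n + 1) (fun s => -Real.log (p - q * s) - P.eval s) =ᶠ[nhds t]
        fun s => (Nat.factorial n : ℝ) * (q ^ (n + 1) * ((p - q * s)⁻¹) ^ (n + 1))
          - (Polynomial.derivative^[n + 1] P).eval s := by
      filter_upwards [isOpen_Iio.mem_nhds ht] with s hs
      exact ih s hs
    rw [hev.deriv_eq]
    have hinv : HasDerivAt (fun s : ℝ => (p - q * s)⁻¹) (-(-q) / (p - q * t) ^ 2) t :=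
      (hasDerivAt_affine p q t).inv hne
    have hpow : HasDerivAt (fun s : ℝ => ((p - q * s)⁻¹) ^ (n + 1))
        ((n + 1) * ((p - q * t)⁻¹) ^ n * (-(-q) / (p - q * t) ^ 2)) t := by
      simpa using hinv.fun_pow (n + 1)
    have hfull : HasDerivAt (fun s => (Nat.factorial n : ℝ) * (q ^ (n + 1) * ((p - q * s)⁻¹) ^ (n + 1))
          - (Polynomial.derivative^[n + 1] P).eval s)
        ((Nat.factorial n : ℝ) * (q ^ (n + 1) * ((n + 1) * ((p - q * t)⁻¹) ^ n * (-(-q) / (p - q * t) ^ 2)))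
          - (Polynomial.derivative (Polynomial.derivative^[n + 1] P)).eval t) t :=
      (((hpow.const_mul (q ^ (n+1))).const_mul ((Nat.factorial n : ℝ))).sub
        ((Polynomial.derivative^[n + 1] P).hasDerivAt t))
    rw [hfull.deriv]
    rw [← Function.iterate_succ_apply' Polynomial.derivative]
    have hfac : (Nat.factorial (n+1) : ℝ) = (n + 1) * (Nat.factorial n : ℝ) := by
      push_cast [Nat.factorial_succ]; ring
    have hinv2 : (-(-q) / (p - q * t) ^ 2) = q * ((p - q * t)⁻¹) ^ 2 := by
      field_simp
    rw [hinv2, hfac]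
    ring

/-- For `p, q > 0` with `b < p/q`, the system `(1, x, …, x^d, −log(p − qx))` is a
Tchebycheff system on `[a,b]`: for any `a ≤ x₀ < ⋯ < x_{d+1} ≤ b`, the determinant of
the matrix whose `i`-th row is `(1, x_i, …, x_i^d, −log(p − q x_i))` is positive. -/
theorem stmt10 (a b p q : ℝ) (hab : a < b) (hp : 0 < p) (hq : 0 < q) (hb : b < p / q)
    (d : ℕ) (x : Fin (d + 2) → ℝ) (hx : StrictMono x) (hmem : ∀ i, x i ∈ Set.Icc a b) :
    0 < Matrix.det (Matrix.of fun i j : Fin (d + 2) =>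
      if (j : ℕ) ≤ d then x i ^ (j : ℕ) else -Real.log (p - q * x i)) := by
  classical
  set f : ℝ → ℝ := fun t => -Real.log (p - q * t) with hf
  have hinj : Set.InjOn x ↑(Finset.univ : Finset (Fin (d + 2))) := hx.injective.injOn
  set P : ℝ[X] := Lagrange.interpolate Finset.univ x (fun i => f (x i)) with hPdef
  have hdeg : P.natDegree < d + 2 := by
    by_cases h0 : P = 0
    · simp [h0]
    · rw [Polynomial.natDegree_lt_iff_degree_lt h0]
      simpa [hPdef] using Lagrange.degree_interpolate_lt (fun i => f (x i)) hinj
  have heval : ∀ i, P.eval (x i) = f (x i) := fun i =>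
    Lagrange.eval_interpolate_at_node _ hinj (Finset.mem_univ i)
  -- positivity of the leading interpolation coefficient
  have hxb : ∀ i, x i ≤ b := fun i => (hmem i).2
  have hUsub : Set.Icc (x 0) (x (Fin.last (d + 1))) ⊆ Set.Iio (p / q) := by
    intro t ht
    exact lt_of_le_of_lt (ht.2.trans (hxb _)) hb
  have hposU : ∀ t ∈ Set.Iio (p / q), 0 < p - q * t := by
    intro t ht
    rw [Set.mem_Iio, lt_div_iff₀ hq] at ht
    nlinarith
  have hg : ContDiffOn ℝ (⊤ : ℕ∞) (fun t => f t - P.eval t) (Set.Iio (p / q)) := by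
    intro t ht
    have hpos := hposU t ht
    have h1 : ContDiffAt ℝ (⊤ : ℕ∞) (fun s : ℝ => -Real.log (p - q * s)) t := by
      exact ((Real.contDiffAt_log.2 (ne_of_gt hpos)).comp t
        (contDiffAt_const.sub (contDiffAt_const.mul contDiffAt_id))).neg
    exact (h1.sub (contDiff_polyeval P).contDiffAt).contDiffWithinAt
  have hz : ∀ i, (fun t => f t - P.eval t) (x i) = 0 := by
    intro i; simp [heval i]
  obtain ⟨ξ, hξmem, hξ⟩ := iter_rolle (d + 1) (fun t => f t - P.eval t) (Set.Iio (p / q))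
    isOpen_Iio hg x hx hUsub hz
  rw [iterDeriv_formula p q hq P d ξ (hUsub hξmem)] at hξ
  -- evaluate the iterated derivative of P
  have hdeg2 : (Polynomial.derivative^[d + 1] P).natDegree = 0 := by
    have h := Polynomial.natDegree_iterate_derivative P (d + 1)
    omega
  have hevalQ : (Polynomial.derivative^[d + 1] P).eval ξ
      = ((d + 1).factorial : ℝ) * P.coeff (d + 1) := by
    have h0 : (Polynomial.derivative^[d + 1] P).coeff 0
        = ((d + 1).factorial : ℝ) * P.coeff (d + 1) := by
      rw [Polynomial.coeff_iterate_derivative]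
      simp only [zero_add, Nat.descFactorial_self, nsmul_eq_mul]
    rw [Polynomial.eq_C_of_natDegree_eq_zero hdeg2, Polynomial.eval_C, h0]
  rw [hevalQ] at hξ
  have hcoeff : 0 < P.coeff (d + 1) := by
    have hpos := hposU ξ (hUsub hξmem)
    have h1 : (0:ℝ) < (Nat.factorial d : ℝ) * (q ^ (d + 1) * ((p - q * ξ)⁻¹) ^ (d + 1)) := by
      positivity
    have h2 : ((d + 1).factorial : ℝ) * P.coeff (d + 1)
        = (Nat.factorial d : ℝ) * (q ^ (d + 1) * ((p - q * ξ)⁻¹) ^ (d + 1)) := by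
      linarith
    have h3 : (0:ℝ) < ((d + 1).factorial : ℝ) := by positivity
    nlinarith
  -- rewrite the matrix as a column update of the Vandermonde matrix
  have hM : (Matrix.of fun i j : Fin (d + 2) =>
      if (j : ℕ) ≤ d then x i ^ (j : ℕ) else -Real.log (p - q * x i))
      = (Matrix.vandermonde x).updateCol (Fin.last (d + 1))
          (fun k => ∑ i : Fin (d + 2), P.coeff (i : ℕ) • Matrix.vandermonde x k i) := by
    ext i j
    rw [Matrix.updateCol_apply]
    by_cases hj : j = Fin.last (d + 1)
    · subst hj
      have hnot : ¬ (((Fin.last (d + 1) : Fin (d + 2)) : ℕ) ≤ d) := by simp [Fin.last]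
      rw [Matrix.of_apply, if_neg hnot, if_pos rfl]
      have h1 : ∑ i' ∈ Finset.range (d + 2), P.coeff i' * x i ^ i' = f (x i) := by
        rw [← Polynomial.eval_eq_sum_range' hdeg (x i)]; exact heval i
      calc -Real.log (p - q * x i) = f (x i) := rfl
        _ = ∑ i' ∈ Finset.range (d + 2), P.coeff i' * x i ^ i' := h1.symm
        _ = ∑ i' : Fin (d + 2), P.coeff (i' : ℕ) • Matrix.vandermonde x i i' := by
            rw [← Fin.sum_univ_eq_sum_range (fun j => P.coeff j * x i ^ j)]
            simp [Matrix.vandermonde_apply, smul_eq_mul]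
    · have hjd : (j : ℕ) ≤ d := by
        have h1 : (j : ℕ) < d + 2 := j.isLt
        have h2 : (j : ℕ) ≠ d + 1 := by
          intro hc
          exact hj (Fin.ext hc)
        omega
      rw [Matrix.of_apply, if_pos hjd, if_neg hj, Matrix.vandermonde_apply]
  rw [hM, Matrix.det_updateCol_sum]
  have hvd : 0 < Matrix.det (Matrix.vandermonde x) := by
    rw [Matrix.det_vandermonde]
    refine Finset.prod_pos fun i _ => Finset.prod_pos fun j hj => ?_
    exact sub_pos.2 (hx (Finset.mem_Ioi.1 hj))
  have hlast : ((Fin.last (d + 1) : Fin (d + 2)) : ℕ) = d + 1 := rfl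
  calc (0:ℝ) < P.coeff (d + 1) * Matrix.det (Matrix.vandermonde x) := mul_pos hcoeff hvd
    _ = P.coeff ((Fin.last (d + 1) : Fin (d + 2)) : ℕ) • Matrix.det (Matrix.vandermonde x) := by
        rw [hlast, smul_eq_mul]
end

section
/- Suppose M₁, M₂, M₃ are the first three moments of some probability distribution on [0,1] and not all equal (M₁ = M₂ = M₃ fails). Then the three-point measure F̄ = f₁δ₀ + f₂δ_{x₂} + f₃δ₁ with x₂ = (M₂ − M₃)/(M₁ − M₂), f₂ = (M₁ − M₂)³/((M₂ − M₃)(M₁ − 2M₂ + M₃)), f₃ = (M₁M₃ − M₂²)/(M₁ − 2M₂ + M₃), f₁ = 1 − f₂ − f₃, is a probability distribution on [0,1] with E[X^m] = M_m for m = 1, 2, 3. -/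
/-!
`F̄` is the quadrature rule with nodes `0, x₂, 1` that is exact for cubics, so the
moment identities are algebra; the content is that its weights are nonnegative. With
`A = M₁ - M₂`, `B = M₂ - M₃`, `D = M₁ - 2M₂ + M₃ = A - B`, each needed inequality is the
`F`-integral of a polynomial that is nonnegative on `[0,1]`: `x(1-x)`, `x²(1-x)`, `x(1-x)²`
give `A, B, D > 0`, strictly since `F` is not concentrated on `{0,1}` (otherwise all moments
would agree), and `x(Ax-B)²`, `(1-x)(Ax-B)²` integrate to `D² f₃` and `B² f₁`.
-/

open MeasureTheory Set

section ThreePoint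

variable {α : Type*} [MeasurableSpace α] {w₁ w₂ w₃ : ℝ}

theorem integral_three_point [MeasurableSingletonClass α] {E : Type*} [NormedAddCommGroup E]
    [NormedSpace ℝ E] [CompleteSpace E] (hw₁ : 0 ≤ w₁) (hw₂ : 0 ≤ w₂) (hw₃ : 0 ≤ w₃)
    (a b c : α) (g : α → E) :
    ∫ x, g x ∂(ENNReal.ofReal w₁ • Measure.dirac a + ENNReal.ofReal w₂ • Measure.dirac b
      + ENNReal.ofReal w₃ • Measure.dirac c) = w₁ • g a + w₂ • g b + w₃ • g c := by
  have hint : ∀ (w : ℝ) (y : α), Integrable g (ENNReal.ofReal w • Measure.dirac y) :=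
    fun w y => (integrable_dirac enorm_lt_top).smul_measure ENNReal.ofReal_ne_top
  rw [integral_add_measure ((hint _ _).add_measure (hint _ _)) (hint _ _),
    integral_add_measure (hint _ _) (hint _ _)]
  simp only [integral_smul_measure, integral_dirac, ENNReal.toReal_ofReal hw₁,
    ENNReal.toReal_ofReal hw₂, ENNReal.toReal_ofReal hw₃]

theorem isProbabilityMeasure_three_point (hw₁ : 0 ≤ w₁) (hw₂ : 0 ≤ w₂) (hw₃ : 0 ≤ w₃)
    (hsum : w₁ + w₂ + w₃ = 1) (a b c : α) :
    IsProbabilityMeasure (ENNReal.ofReal w₁ • Measure.dirac a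
      + ENNReal.ofReal w₂ • Measure.dirac b + ENNReal.ofReal w₃ • Measure.dirac c) := by
  constructor
  simp only [Measure.add_apply, Measure.smul_apply, measure_univ, smul_eq_mul, mul_one]
  rw [← ENNReal.ofReal_add hw₁ hw₂, ← ENNReal.ofReal_add (by positivity) hw₃, hsum,
    ENNReal.ofReal_one]

theorem three_point_apply_compl_eq_zero [MeasurableSingletonClass α] {s : Set α} {a b c : α}
    (ha : a ∈ s) (hb : b ∈ s) (hc : c ∈ s) :
    (ENNReal.ofReal w₁ • Measure.dirac a + ENNReal.ofReal w₂ • Measure.dirac b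
      + ENNReal.ofReal w₃ • Measure.dirac c) sᶜ = 0 := by
  simp [Measure.dirac_apply, ha, hb, hc]

end ThreePoint

section UnitInterval

variable {F : Measure ℝ}

theorem integrable_of_ae_mem_Icc [IsFiniteMeasure F] (hF : ∀ᵐ x ∂F, x ∈ Icc (0 : ℝ) 1)
    {p : ℝ → ℝ} (hp : Continuous p) : Integrable p F := by
  rw [← Measure.restrict_eq_self_of_ae_mem hF]
  exact hp.continuousOn.integrableOn_compact isCompact_Icc

theorem integral_nonneg_of_nonneg_on_Icc (hF : ∀ᵐ x ∂F, x ∈ Icc (0 : ℝ) 1) {p : ℝ → ℝ}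
    (hp : ∀ x ∈ Icc (0 : ℝ) 1, 0 ≤ p x) : 0 ≤ ∫ x, p x ∂F :=
  integral_nonneg_of_ae (hF.mono hp)

theorem integral_pos_of_pos_on_Ioo [IsFiniteMeasure F] (hF : ∀ᵐ x ∂F, x ∈ Icc (0 : ℝ) 1)
    (hdeg : ¬ ∀ᵐ x ∂F, x = 0 ∨ x = 1) {p : ℝ → ℝ} (hp : Continuous p)
    (hnonneg : ∀ x ∈ Icc (0 : ℝ) 1, 0 ≤ p x) (hpos : ∀ x ∈ Ioo (0 : ℝ) 1, 0 < p x) :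
    0 < ∫ x, p x ∂F := by
  have hp_ae : 0 ≤ᵐ[F] p := hF.mono hnonneg
  refine (integral_nonneg_of_ae hp_ae).lt_of_ne fun h => hdeg ?_
  have hzero : p =ᵐ[F] 0 :=
    (integral_eq_zero_iff_of_nonneg_ae hp_ae (integrable_of_ae_mem_Icc hF hp)).1 h.symm
  filter_upwards [hF, hzero] with x ⟨hx₀, hx₁⟩ hpx
  by_contra hx
  exact (hpos x ⟨hx₀.lt_of_ne' (by tauto), hx₁.lt_of_ne (by tauto)⟩).ne' hpx

structure HasMoments (F : Measure ℝ) (M₁ M₂ M₃ : ℝ) : Prop where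
  one : ∫ x, x ∂F = M₁
  two : ∫ x, x ^ 2 ∂F = M₂
  three : ∫ x, x ^ 3 ∂F = M₃

namespace HasMoments

variable {M₁ M₂ M₃ : ℝ}

theorem not_ae_eq_zero_or_one (hM : HasMoments F M₁ M₂ M₃)
    (hne : ¬(M₁ = M₂ ∧ M₂ = M₃)) : ¬ ∀ᵐ x ∂F, x = 0 ∨ x = 1 := by
  intro h01
  have hpow : ∀ n ≠ 0, ∫ x, x ^ n ∂F = M₁ := fun n hn => by
    rw [← hM.one]
    exact integral_congr_ae (h01.mono fun x hx => by rcases hx with rfl | rfl <;> simp [hn])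
  have e₂ : M₂ = M₁ := hM.two ▸ hpow 2 two_ne_zero
  have e₃ : M₃ = M₁ := hM.three ▸ hpow 3 three_ne_zero
  exact hne ⟨e₂.symm, e₂.trans e₃.symm⟩

variable [IsProbabilityMeasure F]

theorem integral_cubic (hM : HasMoments F M₁ M₂ M₃)
    (hF : ∀ᵐ x ∂F, x ∈ Icc (0 : ℝ) 1) {p : ℝ → ℝ} {a b c d : ℝ}
    (hp : ∀ x, p x = a * x ^ 3 + b * x ^ 2 + c * x + d) :
    ∫ x, p x ∂F = a * M₃ + b * M₂ + c * M₁ + d := by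
  have hint : ∀ q : ℝ → ℝ, Continuous q → Integrable q F := fun q => integrable_of_ae_mem_Icc hF
  simp_rw [hp]
  rw [integral_add (hint _ (by fun_prop)) (integrable_const d),
    integral_add (hint _ (by fun_prop)) (hint _ (by fun_prop)),
    integral_add (hint _ (by fun_prop)) (hint _ (by fun_prop)),
    integral_const_mul, integral_const_mul, integral_const_mul, integral_const,
    hM.one, hM.two, hM.three, probReal_univ, one_smul]

theorem moment_two_lt_one (hM : HasMoments F M₁ M₂ M₃) (hF : ∀ᵐ x ∂F, x ∈ Icc (0 : ℝ) 1)
    (hdeg : ¬ ∀ᵐ x ∂F, x = 0 ∨ x = 1) : M₂ < M₁ := by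
  have := integral_pos_of_pos_on_Ioo hF hdeg (p := fun x => x * (1 - x)) (by fun_prop)
    (fun x hx => mul_nonneg hx.1 (by linarith [hx.2]))
    (fun x hx => mul_pos hx.1 (by linarith [hx.2]))
  rw [hM.integral_cubic hF (a := 0) (b := -1) (c := 1) (d := 0) (fun x => by ring)] at this
  linarith

theorem moment_three_lt_two (hM : HasMoments F M₁ M₂ M₃) (hF : ∀ᵐ x ∂F, x ∈ Icc (0 : ℝ) 1)
    (hdeg : ¬ ∀ᵐ x ∂F, x = 0 ∨ x = 1) : M₃ < M₂ := by
  have := integral_pos_of_pos_on_Ioo hF hdeg (p := fun x => x ^ 2 * (1 - x)) (by fun_prop)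
    (fun x hx => mul_nonneg (sq_nonneg x) (by linarith [hx.2]))
    (fun x hx => mul_pos (pow_pos hx.1 2) (by linarith [hx.2]))
  rw [hM.integral_cubic hF (a := -1) (b := 1) (c := 0) (d := 0) (fun x => by ring)] at this
  linarith

theorem second_difference_pos (hM : HasMoments F M₁ M₂ M₃) (hF : ∀ᵐ x ∂F, x ∈ Icc (0 : ℝ) 1)
    (hdeg : ¬ ∀ᵐ x ∂F, x = 0 ∨ x = 1) : 0 < M₁ - 2 * M₂ + M₃ := by
  have := integral_pos_of_pos_on_Ioo hF hdeg (p := fun x => x * (1 - x) ^ 2) (by fun_prop)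
    (fun x hx => mul_nonneg hx.1 (sq_nonneg _))
    (fun x hx => mul_pos hx.1 (pow_pos (by linarith [hx.2]) 2))
  rwa [hM.integral_cubic hF (a := 1) (b := -2) (c := 1) (d := 0) (fun x => by ring),
    show 1 * M₃ + -2 * M₂ + 1 * M₁ + 0 = M₁ - 2 * M₂ + M₃ by ring] at this

theorem sq_moment_two_le (hM : HasMoments F M₁ M₂ M₃) (hF : ∀ᵐ x ∂F, x ∈ Icc (0 : ℝ) 1)
    (hdeg : ¬ ∀ᵐ x ∂F, x = 0 ∨ x = 1) : M₂ ^ 2 ≤ M₁ * M₃ := by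
  have := integral_nonneg_of_nonneg_on_Icc hF
    (p := fun x => x * ((M₁ - M₂) * x - (M₂ - M₃)) ^ 2)
    (fun x hx => mul_nonneg hx.1 (sq_nonneg _))
  rw [hM.integral_cubic hF (a := (M₁ - M₂) ^ 2) (b := -(2 * (M₁ - M₂) * (M₂ - M₃)))
    (c := (M₂ - M₃) ^ 2) (d := 0) (fun x => by ring)] at this
  nlinarith [hM.second_difference_pos hF hdeg]

theorem sq_sub_le (hM : HasMoments F M₁ M₂ M₃) (hF : ∀ᵐ x ∂F, x ∈ Icc (0 : ℝ) 1)
    (hdeg : ¬ ∀ᵐ x ∂F, x = 0 ∨ x = 1) : (M₁ - M₂) ^ 2 ≤ (1 - M₁) * (M₂ - M₃) := by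
  have := integral_nonneg_of_nonneg_on_Icc hF
    (p := fun x => (1 - x) * ((M₁ - M₂) * x - (M₂ - M₃)) ^ 2)
    (fun x hx => mul_nonneg (by linarith [hx.2]) (sq_nonneg _))
  rw [hM.integral_cubic hF (a := -(M₁ - M₂) ^ 2)
    (b := (M₁ - M₂) ^ 2 + 2 * (M₁ - M₂) * (M₂ - M₃))
    (c := -(2 * (M₁ - M₂) * (M₂ - M₃)) - (M₂ - M₃) ^ 2) (d := (M₂ - M₃) ^ 2)
    (fun x => by ring)] at this
  nlinarith [hM.moment_three_lt_two hF hdeg]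

end HasMoments

end UnitInterval

/-- If `(M₁, M₂, M₃)` are the first three moments of some probability distribution on
`[0,1]` and are not all equal, then the three-point measure
`F̄ = f₁δ₀ + f₂δ_{x₂} + f₃δ₁` with `x₂ = (M₂−M₃)/(M₁−M₂)`,
`f₂ = (M₁−M₂)³/((M₂−M₃)(M₁−2M₂+M₃))`, `f₃ = (M₁M₃−M₂²)/(M₁−2M₂+M₃)`,
`f₁ = 1 − f₂ − f₃`, is a probability distribution on `[0,1]` with
`E[X^m] = M_m` for `m = 1, 2, 3`. -/
theorem stmt14 (M₁ M₂ M₃ : ℝ)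
    (hmom : ∃ F : Measure ℝ, IsProbabilityMeasure F ∧ F (Set.Icc (0 : ℝ) 1)ᶜ = 0 ∧
      (∫ x, x ∂F) = M₁ ∧ (∫ x, x ^ 2 ∂F) = M₂ ∧ (∫ x, x ^ 3 ∂F) = M₃)
    (hne : ¬(M₁ = M₂ ∧ M₂ = M₃)) :
    let x₂ : ℝ := (M₂ - M₃) / (M₁ - M₂)
    let f₂ : ℝ := (M₁ - M₂) ^ 3 / ((M₂ - M₃) * (M₁ - 2 * M₂ + M₃))
    let f₃ : ℝ := (M₁ * M₃ - M₂ ^ 2) / (M₁ - 2 * M₂ + M₃)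
    let f₁ : ℝ := 1 - f₂ - f₃
    let Fbar : Measure ℝ := ENNReal.ofReal f₁ • Measure.dirac 0
      + ENNReal.ofReal f₂ • Measure.dirac x₂ + ENNReal.ofReal f₃ • Measure.dirac 1
    0 ≤ f₁ ∧ 0 ≤ f₂ ∧ 0 ≤ f₃ ∧ f₁ + f₂ + f₃ = 1 ∧ x₂ ∈ Set.Icc (0 : ℝ) 1 ∧
      IsProbabilityMeasure Fbar ∧ Fbar (Set.Icc (0 : ℝ) 1)ᶜ = 0 ∧
      (∫ x, x ∂Fbar) = M₁ ∧ (∫ x, x ^ 2 ∂Fbar) = M₂ ∧ (∫ x, x ^ 3 ∂Fbar) = M₃ := by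
  obtain ⟨F, _, hsupp, h₁, h₂, h₃⟩ := hmom
  have hM : HasMoments F M₁ M₂ M₃ := ⟨h₁, h₂, h₃⟩
  have hF : ∀ᵐ x ∂F, x ∈ Icc (0 : ℝ) 1 := mem_ae_iff.2 hsupp
  have hdeg := hM.not_ae_eq_zero_or_one hne
  have hA : 0 < M₁ - M₂ := sub_pos.2 (hM.moment_two_lt_one hF hdeg)
  have hB : 0 < M₂ - M₃ := sub_pos.2 (hM.moment_three_lt_two hF hdeg)
  have hD := hM.second_difference_pos hF hdeg
  intro x₂ f₂ f₃ f₁ Fbar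
  have hf₂ : 0 ≤ f₂ := by positivity
  have hf₃ : 0 ≤ f₃ := div_nonneg (sub_nonneg.2 (hM.sq_moment_two_le hF hdeg)) hD.le
  have hf₁ : 0 ≤ f₁ := by
    have hf₁_eq : f₁ = 1 - M₁ - (M₁ - M₂) ^ 2 / (M₂ - M₃) := by
      simp only [f₁, f₂, f₃]
      -- `field_simp` would normalise `2 * M₂` to `M₂ * 2` and lose track of `hD`.
      generalize hD_def : M₁ - 2 * M₂ + M₃ = D at hD ⊢
      field_simp
      rw [← hD_def]
      ring
    rw [hf₁_eq, sub_nonneg, div_le_iff₀ hB]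
    linarith [hM.sq_sub_le hF hdeg]
  have hsum : f₁ + f₂ + f₃ = 1 := by ring
  have hx₂ : x₂ ∈ Icc (0 : ℝ) 1 := ⟨div_nonneg hB.le hA.le, (div_le_one hA).2 (by linarith)⟩
  refine ⟨hf₁, hf₂, hf₃, hsum, hx₂, isProbabilityMeasure_three_point hf₁ hf₂ hf₃ hsum _ _ _,
    three_point_apply_compl_eq_zero (by simp) hx₂ (by simp), ?_, ?_, ?_⟩ <;>
  · rw [integral_three_point hf₁ hf₂ hf₃]
    simp only [x₂, f₁, f₂, f₃, smul_eq_mul]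
    generalize hD_def : M₁ - 2 * M₂ + M₃ = D at hD ⊢
    field_simp
    rw [← hD_def]
    ring
end

section
/- If (M_0, …, M_d) is an interior point of the moment space 𝓜_{d+1} for the system (1, x, …, x^d) on [a,b], then for every x* ∈ [a,b] there exists a finitely supported representation of (M_0, …, M_d) whose support contains x*. -/
/-!
By Jensen's inequality every moment vector of a finite measure on `[a, b]` lies in the closure
of the convex cone `C` spanned by the curve `x ↦ (1, x, …, x ^ d)`, `x ∈ [a, b]`. In finite
dimension a convex set and its closure have the same interior, so an interior point `M` of the
moment space is interior to `C` itself. Hence `M - ε (1, x*, …, x* ^ d) ∈ C` for some `ε > 0`,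
and adding the atom `ε δ_{x*}` to a conical combination representing this point gives the
required representation.
-/

open MeasureTheory Set Filter Topology

theorem Convex.interior_closure_eq_interior {E : Type*} [NormedAddCommGroup E] [NormedSpace ℝ E]
    [FiniteDimensional ℝ E] {s : Set E} (hs : Convex ℝ s) :
    interior (closure s) = interior s := by
  rcases (interior s).eq_empty_or_nonempty with hempty | hne
  · -- `s` lies in its affine span, a proper and closed subspace, which then contains `closure s`.
    refine hempty ▸ eq_empty_of_forall_notMem fun x hx => ?_
    have hclosure : closure s ⊆ affineSpan ℝ s :=
      closure_minimal (subset_affineSpan ℝ s) (AffineSubspace.closed_of_finiteDimensional _)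
    have hspan : affineSpan ℝ s = ⊤ :=
      top_le_iff.mp <| (hs.closure.interior_nonempty_iff_affineSpan_eq_top.mp ⟨x, hx⟩).ge.trans
        (affineSpan_le.mpr hclosure)
    exact (hs.interior_nonempty_iff_affineSpan_eq_top.mpr hspan).ne_empty hempty
  · exact hs.interior_closure_eq_interior_of_nonempty_interior hne

theorem exists_pos_sub_smul_mem_of_mem_interior {E : Type*} [TopologicalSpace E]
    [AddCommGroup E] [Module ℝ E] [ContinuousSMul ℝ E] [ContinuousSub E] {s : Set E} {x : E}
    (hx : x ∈ interior s) (v : E) : ∃ ε : ℝ, 0 < ε ∧ x - ε • v ∈ s := by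
  have hcont : Tendsto (fun t : ℝ => x - t • v) (𝓝[>] 0) (𝓝 x) :=
    ((continuous_const.sub (continuous_id.smul continuous_const)).tendsto' 0 x
      (by simp)).mono_left nhdsWithin_le_nhds
  obtain ⟨ε, hεs, hε⟩ :=
    ((hcont.eventually (mem_interior_iff_mem_nhds.mp hx)).and self_mem_nhdsWithin).exists
  exact ⟨ε, hε, hεs⟩

theorem exists_mem_support_linearCombination_eq_of_mem_interior_hull {X E : Type*}
    [TopologicalSpace E] [AddCommGroup E] [Module ℝ E] [ContinuousSMul ℝ E] [ContinuousSub E]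
    {K : Set X} {V : X → E} {x₀ : X} (hx₀ : x₀ ∈ K) {y : E}
    (hy : y ∈ interior (PointedCone.hull ℝ (V '' K) : Set E)) :
    ∃ l ∈ Finsupp.supported {c : ℝ // 0 ≤ c} {c : ℝ // 0 ≤ c} K,
      x₀ ∈ l.support ∧ Finsupp.linearCombination {c : ℝ // 0 ≤ c} V l = y := by
  obtain ⟨ε, hε, hyε⟩ := exists_pos_sub_smul_mem_of_mem_interior hy (V x₀)
  obtain ⟨l, hlK, hl⟩ := (Finsupp.mem_span_image_iff_linearCombination _).mp hyε
  refine ⟨l + Finsupp.single x₀ ⟨ε, hε.le⟩, add_mem hlK (Finsupp.single_mem_supported _ _ hx₀),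
    ?_, ?_⟩
  · rw [Finsupp.mem_support_iff]
    refine ne_of_gt (Subtype.coe_lt_coe.mp ?_)
    simpa using add_pos_of_nonneg_of_pos (l x₀).2 hε
  · rw [map_add, hl, Finsupp.linearCombination_single, Nonneg.mk_smul, sub_add_cancel]

theorem PointedCone.integral_mem_closure {X E : Type*} [MeasurableSpace X] [NormedAddCommGroup E]
    [NormedSpace ℝ E] [CompleteSpace E] (C : PointedCone ℝ E) {μ : Measure X} [IsFiniteMeasure μ]
    {f : X → E} (hf : Integrable f μ) (hfC : ∀ᵐ x ∂μ, f x ∈ C) :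
    ∫ x, f x ∂μ ∈ closure (C : Set E) := by
  rcases eq_zero_or_neZero μ with rfl | hμ
  · simpa using subset_closure C.zero_mem
  rw [← measure_smul_average]
  have havg : ⨍ x, f x ∂μ ∈ closure (C : Set E) := by
    simpa using C.convex.set_average_mem_closure (NeZero.ne (μ univ)) (measure_ne_top μ univ)
      (by simpa using hfC) hf.integrableOn
  exact map_mem_closure (continuous_const_smul _) havg fun y hy => C.smul_mem measureReal_nonneg hy

theorem Continuous.integrable_of_ae_mem_compact {X E : Type*} [MeasurableSpace X]
    [TopologicalSpace X] [T2Space X] [OpensMeasurableSpace X] [NormedAddCommGroup E]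
    {f : X → E} (hf : Continuous f) {μ : Measure X} [IsFiniteMeasure μ] {K : Set X}
    (hK : IsCompact K) (hμK : ∀ᵐ x ∂μ, x ∈ K) : Integrable f μ := by
  simpa [IntegrableOn, Measure.restrict_eq_self_of_ae_mem hμK] using
    hf.continuousOn.integrableOn_compact (μ := μ) hK

theorem stmt19_general (a b : ℝ) (d : ℕ) (M : ℕ → ℝ)
    (hint : (fun m : Fin (d + 1) => M (m : ℕ)) ∈ interior
      {v : Fin (d + 1) → ℝ | ∃ σ : Measure ℝ, IsFiniteMeasure σ ∧
        σ (Set.Icc a b)ᶜ = 0 ∧ ∀ m : Fin (d + 1), (∫ x, x ^ (m : ℕ) ∂σ) = v m}) :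
    ∀ xs ∈ Set.Icc a b, ∃ (s : Finset ℝ) (f : ℝ → ℝ),
      (↑s : Set ℝ) ⊆ Set.Icc a b ∧ (∀ x ∈ s, 0 < f x) ∧
      (∀ m ≤ d, ∑ x ∈ s, f x * x ^ m = M m) ∧ xs ∈ s := by
  intro xs hxs
  set V : ℝ → Fin (d + 1) → ℝ := fun x m => x ^ (m : ℕ)
  set C := PointedCone.hull ℝ (V '' Icc a b)
  have hmoments : {v : Fin (d + 1) → ℝ | ∃ σ : Measure ℝ, IsFiniteMeasure σ ∧
      σ (Set.Icc a b)ᶜ = 0 ∧ ∀ m : Fin (d + 1), (∫ x, x ^ (m : ℕ) ∂σ) = v m} ⊆ closure C := by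
    rintro v ⟨σ, hσ, hσK, hσv⟩
    have hae : ∀ᵐ x ∂σ, x ∈ Icc a b := mem_ae_iff.mpr hσK
    have hV : Integrable V σ :=
      (continuous_pi fun m => continuous_pow _).integrable_of_ae_mem_compact isCompact_Icc hae
    have hVv : ∫ x, V x ∂σ = v :=
      funext fun m => (eval_integral (fun i => hV.eval i) m).trans (hσv m)
    exact hVv ▸ C.integral_mem_closure hV
      (hae.mono fun x hx => PointedCone.subset_hull (mem_image_of_mem V hx))
  have hM : (fun m : Fin (d + 1) => M m) ∈ interior (C : Set (Fin (d + 1) → ℝ)) := by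
    rw [← C.convex.interior_closure_eq_interior]
    exact interior_mono hmoments hint
  obtain ⟨l, hlK, hxsl, hlM⟩ := exists_mem_support_linearCombination_eq_of_mem_interior_hull hxs hM
  refine ⟨l.support, fun x => l x, fun x hx => hlK hx, fun x hx => ?_, fun m hm => ?_, hxsl⟩
  · exact lt_of_le_of_ne (l x).2 (Subtype.coe_ne_coe.mpr (Finsupp.mem_support_iff.mp hx).symm)
  · simpa [Finsupp.linearCombination_apply, Finsupp.sum, V, ← Nonneg.coe_smul] using
      congrFun hlM ⟨m, by omega⟩

/-- If `(M₀, …, M_d)` is an interior point of the moment space `𝓜_{d+1}` for the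
system `(1, x, …, x^d)` on `[a,b]`, then for every `x* ∈ [a,b]` there is a finitely
supported representation of `(M₀, …, M_d)` whose support contains `x*`. -/
theorem stmt19 (a b : ℝ) (hab : a < b) (d : ℕ) (M : ℕ → ℝ)
    (hint : (fun m : Fin (d + 1) => M (m : ℕ)) ∈ interior
      {v : Fin (d + 1) → ℝ | ∃ σ : Measure ℝ, IsFiniteMeasure σ ∧
        σ (Set.Icc a b)ᶜ = 0 ∧ ∀ m : Fin (d + 1), (∫ x, x ^ (m : ℕ) ∂σ) = v m}) :
    ∀ xs ∈ Set.Icc a b, ∃ (s : Finset ℝ) (f : ℝ → ℝ),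
      (↑s : Set ℝ) ⊆ Set.Icc a b ∧ (∀ x ∈ s, 0 < f x) ∧
      (∀ m ≤ d, ∑ x ∈ s, f x * x ^ m = M m) ∧ xs ∈ s :=
  stmt19_general a b d M hint
end
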